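/- Let s > −1 and η > 0 satisfy η² ≥ 2^{1−2s}·2^42 if −1 < s < 1/2, and η² ≥ 2^42 if s ≥ 1/2. If w : ℝ → [0,∞) is a measurable function such that w(ξ) ≥ η^{2^n} · f_n(T_*) · g_n(ξ) for every n ∈ ℕ and every ξ ∈ ℝ, then ∫_ℝ |ξ|^{2s} w(ξ)² dξ = +∞; i.e., w has infinite homogeneous Sobolev Ḣ^s norm. -/

import Mathlib

open MeasureTheory Real Set

/-- The sequence of functions `g n`: `g 0` is the indicator of `(1,2)` and
`g (n+1) = g n * g n` (convolution). -/
noncomputable def g : ℕ → ℝ → ℝ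
  | 0 => Set.indicator (Set.Ioo (1:ℝ) 2) 1
  | n + 1 => fun ξ => ∫ ρ : ℝ, g n ρ * g n (ξ - ρ)

/-- `f n t = exp(-(3/2) t 2^(n+4)) 2^(-5(2^n-1)) 2^(5n)`. -/
noncomputable def f (n : ℕ) (t : ℝ) : ℝ :=
  Real.exp (-(3/2) * t * 2 ^ (n + 4)) * (2:ℝ) ^ (-(5:ℝ) * ((2:ℝ) ^ n - 1)) * 2 ^ (5 * n)

/-- The blow-up time `T_* = (2 ln 2)/3`. -/
noncomputable def Tstar : ℝ := 2 * Real.log 2 / 3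

/-- The (Fourier side) nonlinear term
`γ₁ (|·|v * |·|v)(ξ) - γ₂ (v * (·)² v)(ξ)`, as a well-defined element of `[0,∞]`
(recall `γ₂ ≤ 0 ≤ γ₁`). -/
noncomputable def nlTerm (γ₁ γ₂ : ℝ) (vτ : ℝ → ℝ) (ξ : ℝ) : ENNReal :=
  ENNReal.ofReal γ₁ * ∫⁻ ρ : ℝ, ENNReal.ofReal (|ρ| * vτ ρ * (|ξ - ρ| * vτ (ξ - ρ)))
  + ENNReal.ofReal (-γ₂) * ∫⁻ ρ : ℝ, ENNReal.ofReal (vτ ρ * ((ξ - ρ)^2 * vτ (ξ - ρ)))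

/-- A nonnegative measurable `v` on `[0,T] × ℝ` satisfies the Duhamel–Fourier
inequality if for all `t ∈ [0,T]` and `ξ ∈ ℝ`,
`v(t,ξ) ≥ η e^{-(3/2)tξ⁴} 𝟙_{(1,2)}(ξ) + ∫₀ᵗ e^{-(3/2)(t-τ)ξ⁴} (γ₁ (|·|v*|·|v) - γ₂ (v*(·)²v))(τ,ξ) dτ`,
the right-hand side being well defined in `[0,∞]`. -/
def DuhamelIneq (γ₁ γ₂ η T : ℝ) (v : ℝ → ℝ → ℝ) : Prop :=
  ∀ t ∈ Set.Icc (0:ℝ) T, ∀ ξ : ℝ,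
    ENNReal.ofReal (v t ξ) ≥
      ENNReal.ofReal (η * Real.exp (-(3/2) * t * ξ^4) * Set.indicator (Set.Ioo (1:ℝ) 2) 1 ξ)
      + ∫⁻ τ in Set.Ioc (0:ℝ) t,
          ENNReal.ofReal (Real.exp (-(3/2) * (t - τ) * ξ^4)) * nlTerm γ₁ γ₂ (v τ) ξ

open scoped ENNReal Convolution

/-! The `g n` are probability densities supported in `(2ⁿ, 2ⁿ⁺¹)`, since convolution adds
supports and multiplies masses; by Cauchy–Schwarz, `∫ g n ^ 2 ≥ 2⁻ⁿ`. The hypothesis on `η`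
forces `η ≥ 2²¹`; as `f_n(T_*) = 2^(5n+5-21·2ⁿ)`, the coefficient `η^(2ⁿ) f_n(T_*)` is then at
least `2^(5n+5)`, while for `s ≥ -1` the weight `|ξ|^(2s)` is at least `4^-(n+1)` on
`(2ⁿ, 2ⁿ⁺¹)`. Hence the part of the integral over `(2ⁿ, 2ⁿ⁺¹)` is at least `2ⁿ`, for every `n`. -/

theorem sq_lintegral_le_measure_univ_mul_lintegral_sq {α : Type*} [MeasurableSpace α]
    {μ : Measure α} {f : α → ℝ≥0∞} (hf : AEMeasurable f μ) :
    (∫⁻ x, f x ∂μ) ^ 2 ≤ μ univ * ∫⁻ x, f x ^ 2 ∂μ := by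
  have h := ENNReal.lintegral_mul_le_Lp_mul_Lq μ Real.HolderConjugate.two_two hf
    (aemeasurable_const (b := (1 : ℝ≥0∞)))
  simp only [Pi.mul_apply, mul_one, ENNReal.one_rpow, lintegral_const, one_mul] at h
  calc (∫⁻ x, f x ∂μ) ^ 2
      ≤ ((∫⁻ x, f x ^ (2 : ℝ) ∂μ) ^ (1 / 2 : ℝ) * μ univ ^ (1 / 2 : ℝ)) ^ 2 := by gcongr
    _ = μ univ * ∫⁻ x, f x ^ 2 ∂μ := by
      rw [mul_pow, ← ENNReal.rpow_natCast, ← ENNReal.rpow_natCast, ← ENNReal.rpow_mul,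
        ← ENNReal.rpow_mul]
      norm_num [mul_comm]

theorem g_succ_eq_convolution (n : ℕ) :
    g (n + 1) = g n ⋆[ContinuousLinearMap.lsmul ℝ ℝ] g n := by
  ext ξ
  simp [g, convolution_def]

theorem g_nonneg (n : ℕ) (ξ : ℝ) : 0 ≤ g n ξ := by
  induction n generalizing ξ with
  | zero => exact indicator_nonneg (fun _ _ => zero_le_one) ξ
  | succ n ih => exact integral_nonneg fun ρ => mul_nonneg (ih ρ) (ih _)

theorem support_g_subset (n : ℕ) :
    Function.support (g n) ⊆ Ioo ((2 : ℝ) ^ n) (2 ^ (n + 1)) := by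
  induction n with
  | zero => simp [g]
  | succ n ih =>
    rw [g_succ_eq_convolution]
    refine (support_convolution_subset _).trans ?_
    rintro _ ⟨a, ha, b, hb, rfl⟩
    obtain ⟨ha₁, ha₂⟩ := ih ha
    obtain ⟨hb₁, hb₂⟩ := ih hb
    constructor <;> rw [pow_succ] <;> linarith

theorem integrable_g_and_integral_eq_one (n : ℕ) : Integrable (g n) ∧ ∫ ξ, g n ξ = 1 := by
  induction n with
  | zero =>
    refine ⟨(integrable_indicator_iff measurableSet_Ioo).2
      (integrableOn_const measure_Ioo_lt_top.ne), ?_⟩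
    norm_num [g, integral_indicator_one measurableSet_Ioo]
  | succ n ih =>
    rw [g_succ_eq_convolution]
    exact ⟨ih.1.integrable_convolution _ ih.1, by simp [integral_convolution _ ih.1 ih.1, ih.2]⟩

theorem integrable_g (n : ℕ) : Integrable (g n) := (integrable_g_and_integral_eq_one n).1

theorem lintegral_ofReal_g (n : ℕ) : ∫⁻ ξ, ENNReal.ofReal (g n ξ) = 1 := by
  rw [← ofReal_integral_eq_lintegral_ofReal (integrable_g n)
    (Filter.Eventually.of_forall (g_nonneg n)), (integrable_g_and_integral_eq_one n).2,
    ENNReal.ofReal_one]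

theorem one_le_two_pow_mul_setLIntegral_g_sq (n : ℕ) :
    1 ≤ 2 ^ n * ∫⁻ ξ in Ioo ((2 : ℝ) ^ n) (2 ^ (n + 1)), ENNReal.ofReal (g n ξ) ^ 2 := by
  set I := Ioo ((2 : ℝ) ^ n) (2 ^ (n + 1))
  have hmass : ∫⁻ ξ in I, ENNReal.ofReal (g n ξ) = 1 := by
    rw [setLIntegral_eq_of_support_subset, lintegral_ofReal_g]
    exact (Function.support_comp_subset ENNReal.ofReal_zero _).trans (support_g_subset n)
  have hvol : volume I = 2 ^ n := by
    rw [Real.volume_Ioo, pow_succ, show (2 : ℝ) ^ n * 2 - 2 ^ n = 2 ^ n by ring,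
      ENNReal.ofReal_pow zero_le_two, ENNReal.ofReal_ofNat]
  calc 1 = (∫⁻ ξ in I, ENNReal.ofReal (g n ξ)) ^ 2 := by rw [hmass, one_pow]
    _ ≤ _ := sq_lintegral_le_measure_univ_mul_lintegral_sq
          (integrable_g n).aemeasurable.ennreal_ofReal.restrict
    _ = _ := by rw [Measure.restrict_apply_univ, hvol]

theorem inv_sq_le_rpow_two_mul {x s : ℝ} (hx : 1 ≤ x) (hs : -1 ≤ s) :
    (x ^ 2)⁻¹ ≤ x ^ (2 * s) := by
  rw [← rpow_natCast, ← rpow_neg (by linarith)]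
  exact rpow_le_rpow_of_exponent_le hx (by push_cast; linarith)

theorem f_Tstar_mul_two_pow (n : ℕ) : f n Tstar * 2 ^ (21 * 2 ^ n) = 2 ^ (5 * n + 5) := by
  have hexp : Real.exp (-(3/2) * Tstar * 2 ^ (n + 4)) = (2 : ℝ) ^ (-(16 * 2 ^ n : ℝ)) := by
    rw [rpow_def_of_pos two_pos, Tstar, pow_add]
    ring_nf
  rw [f, hexp, ← rpow_natCast 2 (5 * n), ← rpow_natCast 2 (21 * 2 ^ n),
    ← rpow_natCast 2 (5 * n + 5), ← rpow_add two_pos, ← rpow_add two_pos, ← rpow_add two_pos]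
  congr 1
  push_cast
  ring

theorem two_pow_le_pow_mul_f_Tstar {η : ℝ} (hη : 2 ^ 21 ≤ η) (n : ℕ) :
    2 ^ (5 * n + 5) ≤ η ^ (2 ^ n) * f n Tstar := by
  have hf : 0 < f n Tstar := by unfold f; positivity
  calc (2 : ℝ) ^ (5 * n + 5) = (2 ^ 21) ^ (2 ^ n) * f n Tstar := by
        rw [← pow_mul, ← f_Tstar_mul_two_pow, mul_comm]
    _ ≤ η ^ (2 ^ n) * f n Tstar := by gcongr

theorem two_pow_le_lintegral_rpow_mul_sq {s K : ℝ} {w : ℝ → ℝ} (hs : -1 ≤ s) (n : ℕ)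
    (hK : 2 ^ (5 * n + 5) ≤ K) (hw : ∀ ξ, K * g n ξ ≤ w ξ) :
    2 ^ n ≤ ∫⁻ ξ, ENNReal.ofReal (|ξ| ^ (2 * s) * w ξ ^ 2) := by
  set I := Ioo ((2 : ℝ) ^ n) (2 ^ (n + 1))
  have hpt : ∀ ξ ∈ I, 4 ^ n * g n ξ ^ 2 ≤ |ξ| ^ (2 * s) * w ξ ^ 2 := by
    rintro ξ ⟨h₁, h₂⟩
    have hξ : 1 ≤ ξ := (one_le_pow₀ one_le_two).trans h₁.le
    have hweight : (4 ^ (n + 1))⁻¹ ≤ |ξ| ^ (2 * s) :=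
      calc ((4 : ℝ) ^ (n + 1))⁻¹ = ((2 ^ (n + 1)) ^ 2)⁻¹ := by
            rw [← pow_mul, mul_comm, pow_mul]; norm_num
        _ ≤ (ξ ^ 2)⁻¹ := by gcongr
        _ ≤ ξ ^ (2 * s) := inv_sq_le_rpow_two_mul hξ hs
        _ = |ξ| ^ (2 * s) := by rw [abs_of_pos (by linarith)]
    have hKg : (2 ^ (5 * n + 5) * g n ξ) ^ 2 ≤ w ξ ^ 2 :=
      pow_le_pow_left₀ (by positivity [g_nonneg n ξ])
        ((mul_le_mul_of_nonneg_right hK (g_nonneg n ξ)).trans (hw ξ)) 2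
    calc 4 ^ n * g n ξ ^ 2 ≤ 4 ^ (4 * n + 4) * g n ξ ^ 2 := by
          gcongr
          · norm_num
          · omega
      _ = (4 ^ (n + 1))⁻¹ * (2 ^ (5 * n + 5) * g n ξ) ^ 2 := by
          rw [mul_pow, ← pow_mul, mul_comm (5 * n + 5), pow_mul]
          field_simp
          ring_nf
      _ ≤ |ξ| ^ (2 * s) * w ξ ^ 2 := mul_le_mul hweight hKg (by positivity) (by positivity)
  calc (2 : ℝ≥0∞) ^ n ≤ 2 ^ n * (2 ^ n * ∫⁻ ξ in I, ENNReal.ofReal (g n ξ) ^ 2) :=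
        le_mul_of_one_le_right' (one_le_two_pow_mul_setLIntegral_g_sq n)
    _ = ∫⁻ ξ in I, ENNReal.ofReal (4 ^ n * g n ξ ^ 2) := by
        rw [← mul_assoc, ← mul_pow,
          ← lintegral_const_mul' _ _ (ENNReal.pow_ne_top (by norm_num))]
        refine lintegral_congr fun ξ => ?_
        rw [ENNReal.ofReal_mul (by positivity), ENNReal.ofReal_pow (g_nonneg n ξ)]
        norm_num
    _ ≤ ∫⁻ ξ in I, ENNReal.ofReal (|ξ| ^ (2 * s) * w ξ ^ 2) :=
        setLIntegral_mono' measurableSet_Ioo fun ξ hξ => ENNReal.ofReal_le_ofReal (hpt ξ hξ)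
    _ ≤ ∫⁻ ξ, ENNReal.ofReal (|ξ| ^ (2 * s) * w ξ ^ 2) := setLIntegral_le_lintegral _ _

theorem hs_norm_infinite_general (s η : ℝ) (hs : -1 < s) (hη : 0 < η)
    (hη1 : -1 < s → s < 1/2 → (2:ℝ) ^ (1 - 2*s) * 2 ^ 42 ≤ η ^ 2)
    (hη2 : 1/2 ≤ s → (2:ℝ) ^ (42:ℕ) ≤ η ^ 2)
    (w : ℝ → ℝ)
    (hlow : ∀ n : ℕ, ∀ ξ : ℝ, η ^ (2 ^ n) * f n Tstar * g n ξ ≤ w ξ) :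
    ∫⁻ ξ : ℝ, ENNReal.ofReal (|ξ| ^ (2*s) * (w ξ) ^ 2) = ⊤ := by
  have hη42 : (2 : ℝ) ^ 42 ≤ η ^ 2 := by
    rcases le_or_gt (1 / 2) s with hs' | hs'
    · exact hη2 hs'
    · exact (le_mul_of_one_le_left (by positivity) (one_le_rpow one_le_two (by linarith))).trans
        (hη1 hs hs')
  have hη21 : (2 : ℝ) ^ 21 ≤ η :=
    le_of_pow_le_pow_left₀ two_ne_zero hη.le (by rwa [← pow_mul])
  refine top_le_iff.1 <|
    le_of_tendsto' (ENNReal.tendsto_pow_atTop_nhds_top_iff.2 ENNReal.one_lt_two) fun n => ?_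
  exact two_pow_le_lintegral_rpow_mul_sq hs.le n (two_pow_le_pow_mul_f_Tstar hη21 n) (hlow n)

/-- Infinite `Ḣˢ` norm: let `s > -1` and `η > 0` satisfy `η² ≥ 2^(1-2s)·2^42`
if `-1 < s < 1/2` and `η² ≥ 2^42` if `s ≥ 1/2`. If the nonnegative measurable
`w` satisfies `w(ξ) ≥ η^(2^n) f_n(T_*) g_n(ξ)` for every `n` and `ξ`, then
`∫ |ξ|^(2s) w(ξ)² dξ = +∞`. -/
theorem hs_norm_infinite (s η : ℝ) (hs : -1 < s) (hη : 0 < η)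
    (hη1 : -1 < s → s < 1/2 → (2:ℝ) ^ (1 - 2*s) * 2 ^ 42 ≤ η ^ 2)
    (hη2 : 1/2 ≤ s → (2:ℝ) ^ (42:ℕ) ≤ η ^ 2)
    (w : ℝ → ℝ) (hwmeas : Measurable w) (hwpos : ∀ ξ, 0 ≤ w ξ)
    (hlow : ∀ n : ℕ, ∀ ξ : ℝ, η ^ (2 ^ n) * f n Tstar * g n ξ ≤ w ξ) :
    ∫⁻ ξ : ℝ, ENNReal.ofReal (|ξ| ^ (2*s) * (w ξ) ^ 2) = ⊤ :=
  hs_norm_infinite_general s η hs hη hη1 hη2 w hlow
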